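/- arXiv:1906.07231 — 4 statements merged into one kernel-verified Lean document; each statement's English description precedes it below -/
import Mathlib

section
/- Every function ψ : Q → ℝ satisfying ψ(x) − ψ(y) ≤ n·max(|x₁ − y₁|, |x₂ − y₂|) for all x, y ∈ Q and ψ(x) = ψ_∂Q(x) for all x ∈ ∂Q satisfies ψ⁻(x) ≤ ψ(x) ≤ ψ⁺(x) for all x ∈ Q. Moreover, ψ⁻ and ψ⁺ themselves satisfy these two conditions; thus ψ⁻ (resp. ψ⁺) is the minimal (resp. maximal) such function. -/
/-- The rescaled Aztec diamond `Q = {x : |x₁| + |x₂| ≤ 1/(2n)}`. -/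
def Qset (n : ℕ) : Set (ℝ × ℝ) := {x | |x.1| + |x.2| ≤ 1 / (2 * n)}

/-- The boundary `∂Q = {x : |x₁| + |x₂| = 1/(2n)}`. -/
def bdQ (n : ℕ) : Set (ℝ × ℝ) := {x | |x.1| + |x.2| = 1 / (2 * n)}

/-- The boundary datum `ψ_∂Q(x) = (n/2)(|x₁| − |x₂|)`. -/
noncomputable def psiBd (n : ℕ) (x : ℝ × ℝ) : ℝ := ((n : ℝ) / 2) * (|x.1| - |x.2|)

/-- The minimal function `ψ⁻(x) = n|x₁| − 1/4`. -/
noncomputable def psiMinus (n : ℕ) (x : ℝ × ℝ) : ℝ := (n : ℝ) * |x.1| - 1 / 4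

/-- The maximal function `ψ⁺(x) = 1/4 − n|x₂|`. -/
noncomputable def psiPlus (n : ℕ) (x : ℝ × ℝ) : ℝ := 1 / 4 - (n : ℝ) * |x.2|

/-- A function `ψ : Q → ℝ` which is Lipschitz with gradient constrained to the Newton polygon
`N = {ρ : |ρ₁| + |ρ₂| ≤ n}` (expressed by `ψ(x) − ψ(y) ≤ n·max(|x₁−y₁|,|x₂−y₂|)`) and which
agrees with `ψ_∂Q` on `∂Q`. -/
def Admissible (n : ℕ) (ψ : ℝ × ℝ → ℝ) : Prop :=
  (∀ x ∈ Qset n, ∀ y ∈ Qset n, ψ x - ψ y ≤ (n : ℝ) * max |x.1 - y.1| |x.2 - y.2|) ∧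
  ∀ x ∈ bdQ n, ψ x = psiBd n x

/-!
On `∂Q` we have `n(|x₁| + |x₂|) = 1/2`, so the boundary datum equals both
`ψ⁻` and `ψ⁺` there. Given `x ∈ Q`, push `x₁` away from `0` (keeping its sign) until it hits
`∂Q` at a point `y`; the gradient constraint bounds `ψ(y) − ψ(x)` by `n(|y₁| − |x₁|)`, which is
exactly `ψ⁻(y) − ψ⁻(x)`, hence `ψ⁻(x) ≤ ψ(x)`. Pushing `x₂` instead gives `ψ(x) ≤ ψ⁺(x)`.
Finally `ψ⁻` and `ψ⁺` depend on one coordinate each with slope `n`, so they satisfy the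
constraint themselves.
-/

lemma exists_abs_eq_abs_sub_eq {a b : ℝ} (h : |a| ≤ b) :
    ∃ t : ℝ, |t| = b ∧ |t - a| = b - |a| := by
  have hb : 0 ≤ b := (abs_nonneg a).trans h
  rcases le_or_gt 0 a with ha | ha
  · rw [abs_of_nonneg ha] at h ⊢
    exact ⟨b, abs_of_nonneg hb, abs_of_nonneg (by linarith)⟩
  · rw [abs_of_neg ha] at h ⊢
    refine ⟨-b, by rw [abs_neg, abs_of_nonneg hb], ?_⟩
    rw [abs_of_nonpos (by linarith)]
    ring

variable {n : ℕ}

lemma bdQ_subset_Qset : bdQ n ⊆ Qset n := fun _ hx => le_of_eq hx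

lemma exists_mem_bdQ_fst {x : ℝ × ℝ} (hx : x ∈ Qset n) :
    ∃ y ∈ bdQ n, y.2 = x.2 ∧ |y.1 - x.1| = |y.1| - |x.1| := by
  have hx' : |x.1| ≤ 1 / (2 * n) - |x.2| := by
    have : |x.1| + |x.2| ≤ 1 / (2 * n) := hx
    linarith
  obtain ⟨t, ht, hdist⟩ := exists_abs_eq_abs_sub_eq hx'
  refine ⟨(t, x.2), ?_, rfl, ?_⟩
  · show |t| + |x.2| = 1 / (2 * n)
    rw [ht]; ring
  · simp only [hdist, ht]

lemma exists_mem_bdQ_snd {x : ℝ × ℝ} (hx : x ∈ Qset n) :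
    ∃ y ∈ bdQ n, y.1 = x.1 ∧ |y.2 - x.2| = |y.2| - |x.2| := by
  have hx' : |x.2| ≤ 1 / (2 * n) - |x.1| := by
    have : |x.1| + |x.2| ≤ 1 / (2 * n) := hx
    linarith
  obtain ⟨t, ht, hdist⟩ := exists_abs_eq_abs_sub_eq hx'
  refine ⟨(x.1, t), ?_, rfl, ?_⟩
  · show |x.1| + |t| = 1 / (2 * n)
    rw [ht]; ring
  · simp only [hdist, ht]

lemma mul_add_abs_eq_of_mem_bdQ (hn : n ≠ 0) {x : ℝ × ℝ} (hx : x ∈ bdQ n) :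
    (n : ℝ) * (|x.1| + |x.2|) = 1 / 2 := by
  rw [show |x.1| + |x.2| = 1 / (2 * n) from hx]
  field_simp

lemma psiBd_eq_psiMinus (hn : n ≠ 0) {x : ℝ × ℝ} (hx : x ∈ bdQ n) :
    psiBd n x = psiMinus n x := by
  have := mul_add_abs_eq_of_mem_bdQ hn hx
  unfold psiBd psiMinus
  linarith

lemma psiBd_eq_psiPlus (hn : n ≠ 0) {x : ℝ × ℝ} (hx : x ∈ bdQ n) :
    psiBd n x = psiPlus n x := by
  have := mul_add_abs_eq_of_mem_bdQ hn hx
  unfold psiBd psiPlus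
  linarith

lemma Admissible.psiMinus_le (hn : n ≠ 0) {ψ : ℝ × ℝ → ℝ} (hψ : Admissible n ψ)
    {x : ℝ × ℝ} (hx : x ∈ Qset n) : psiMinus n x ≤ ψ x := by
  obtain ⟨y, hy, hy₂, hdist⟩ := exists_mem_bdQ_fst hx
  have hLip := hψ.1 y (bdQ_subset_Qset hy) x hx
  rw [hy₂, sub_self, abs_zero, max_eq_left (abs_nonneg _), hdist, hψ.2 y hy,
    psiBd_eq_psiMinus hn hy] at hLip
  unfold psiMinus at hLip ⊢
  linarith

lemma Admissible.le_psiPlus (hn : n ≠ 0) {ψ : ℝ × ℝ → ℝ} (hψ : Admissible n ψ)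
    {x : ℝ × ℝ} (hx : x ∈ Qset n) : ψ x ≤ psiPlus n x := by
  obtain ⟨y, hy, hy₁, hdist⟩ := exists_mem_bdQ_snd hx
  have hLip := hψ.1 x hx y (bdQ_subset_Qset hy)
  rw [hy₁, sub_self, abs_zero, max_eq_right (abs_nonneg _), abs_sub_comm, hdist, hψ.2 y hy,
    psiBd_eq_psiPlus hn hy] at hLip
  unfold psiPlus at hLip ⊢
  linarith

lemma admissible_psiMinus (hn : n ≠ 0) : Admissible n (psiMinus n) := by
  refine ⟨fun x _ y _ => ?_, fun x hx => (psiBd_eq_psiMinus hn hx).symm⟩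
  calc psiMinus n x - psiMinus n y = n * (|x.1| - |y.1|) := by unfold psiMinus; ring
    _ ≤ n * max |x.1 - y.1| |x.2 - y.2| := by
      gcongr; exact (abs_sub_abs_le_abs_sub _ _).trans (le_max_left _ _)

lemma admissible_psiPlus (hn : n ≠ 0) : Admissible n (psiPlus n) := by
  refine ⟨fun x _ y _ => ?_, fun x hx => (psiBd_eq_psiPlus hn hx).symm⟩
  calc psiPlus n x - psiPlus n y = n * (|y.2| - |x.2|) := by unfold psiPlus; ring
    _ ≤ n * max |x.1 - y.1| |x.2 - y.2| := by
      gcongr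
      rw [abs_sub_comm x.2]
      exact (abs_sub_abs_le_abs_sub _ _).trans (le_max_right _ _)

/-- every admissible `ψ` satisfies `ψ⁻ ≤ ψ ≤ ψ⁺` on `Q`; moreover `ψ⁻` and `ψ⁺`
are themselves admissible, so they are the minimal and maximal admissible functions. -/
theorem stmt_2 (n : ℕ) (hn : 1 ≤ n) :
    (∀ ψ : ℝ × ℝ → ℝ, Admissible n ψ →
      ∀ x ∈ Qset n, psiMinus n x ≤ ψ x ∧ ψ x ≤ psiPlus n x) ∧
    Admissible n (psiMinus n) ∧ Admissible n (psiPlus n) := by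
  have hn₀ : n ≠ 0 := Nat.one_le_iff_ne_zero.mp hn
  exact ⟨fun ψ hψ x hx => ⟨hψ.psiMinus_le hn₀ hx, hψ.le_psiPlus hn₀ hx⟩,
    admissible_psiMinus hn₀, admissible_psiPlus hn₀⟩
end

section
/- Let σ : ℝ² → ℝ be continuous and strictly convex. Then there exists a Lipschitz function ψ : Q → ℝ with ψ = ψ_∂Q on ∂Q and ∇ψ(x) ∈ N for almost every x ∈ Q such that ∫_Q σ(∇ψ(x)) dx < ∫_Q σ(∇ψ⁺(x)) dx = (|Q|/2)(σ(0,n) + σ(0,−n)), where |Q| denotes the area of Q. In particular, ψ⁺ does not minimize the functional ψ ↦ ∫_Q σ(∇ψ(x)) dx over the class of Lipschitz functions with boundary value ψ_∂Q and almost-everywhere gradient in N; the analogous statement holds with ψ⁺ replaced by ψ⁻ and σ(0,n) + σ(0,−n) replaced by σ(n,0) + σ(−n,0). -/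
/-!
The competitor lowers the roof `ψ⁺` near the centre of `Q`: it is `min ψ⁺ g` with
`g x = εn|x₁| + 1/4 − ε/2`, which lies above `ψ⁺` on `∂Q` and below it exactly on the small
diamond `R = {εn|x₁| + n|x₂| < ε/2}`. Off `R` nothing changes. On `R` the gradient of `ψ⁺` is
`(0, ∓n)` and that of the competitor `(±εn, 0)`, each value on half of `R` by the reflections
`x₂ ↦ −x₂` and `x₁ ↦ −x₁`, so the energy drops by `|R|/2 · (σ(0,n) + σ(0,−n) − σ(εn,0) − σ(−εn,0))`.
This is positive for small `ε`, since strict convexity gives `2σ(0) < σ(0,n) + σ(0,−n)`.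
Since `ψ⁻ = −ψ⁺ ∘ swap`, the claims about `ψ⁻` are those about `ψ⁺` for `ρ ↦ σ(−ρ.swap)`.
-/

open MeasureTheory

/-- The Newton polygon `N = {ρ : |ρ₁| + |ρ₂| ≤ n}`. -/
def NP (n : ℕ) : Set (ℝ × ℝ) := {ρ | |ρ.1| + |ρ.2| ≤ (n : ℝ)}

/-- The gradient `∇ψ(x) = (∂₁ψ(x), ∂₂ψ(x))` (junk value `0` where `ψ` is not
differentiable; a Lipschitz function is differentiable a.e.). -/
noncomputable def grad (ψ : ℝ × ℝ → ℝ) (x : ℝ × ℝ) : ℝ × ℝ :=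
  (fderiv ℝ ψ x (1, 0), fderiv ℝ ψ x (0, 1))

open Filter Topology Set

section Symmetrization

variable {α : Type*} [MeasurableSpace α] {μ : Measure α} {T : α → α} {s : Set α}

theorem MeasureTheory.MeasurePreserving.setIntegral_comp_of_preimage_eq
    (hT : MeasurePreserving T μ μ) (hTe : MeasurableEmbedding T) (hs : T ⁻¹' s = s)
    (f : α → ℝ) : ∫ x in s, f (T x) ∂μ = ∫ x in s, f x ∂μ := by
  conv_lhs => rw [← hs]
  exact hT.setIntegral_preimage_emb hTe f s

theorem setIntegral_eq_half_mul_of_add_comp_ae_eq (hT : MeasurePreserving T μ μ)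
    (hTe : MeasurableEmbedding T) (hsm : MeasurableSet s) (hs : T ⁻¹' s = s) {f : α → ℝ}
    (hf : IntegrableOn f s μ) {c : ℝ} (hc : ∀ᵐ x ∂μ, x ∈ s → f x + f (T x) = c) :
    ∫ x in s, f x ∂μ = μ.real s / 2 * c := by
  have hfT : IntegrableOn (fun x => f (T x)) s μ := by
    simpa only [hs, Function.comp_def] using (hT.integrableOn_comp_preimage hTe).2 hf
  have h := setIntegral_congr_ae hsm hc
  rw [integral_add hf hfT, hT.setIntegral_comp_of_preimage_eq hTe hs, setIntegral_const,
    smul_eq_mul] at h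
  linarith

end Symmetrization

lemma measurePreserving_prodMap_id_neg :
    MeasurePreserving (Prod.map id Neg.neg : ℝ × ℝ → ℝ × ℝ) :=
  (MeasurePreserving.id volume).prod (Measure.measurePreserving_neg volume)

lemma measurePreserving_prodMap_neg_id :
    MeasurePreserving (Prod.map Neg.neg id : ℝ × ℝ → ℝ × ℝ) :=
  (Measure.measurePreserving_neg volume).prod (MeasurePreserving.id volume)

lemma measurableEmbedding_prodMap_id_neg :
    MeasurableEmbedding (Prod.map id Neg.neg : ℝ × ℝ → ℝ × ℝ) :=
  MeasurableEmbedding.id.prodMap (MeasurableEquiv.neg ℝ).measurableEmbedding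

lemma measurableEmbedding_prodMap_neg_id :
    MeasurableEmbedding (Prod.map Neg.neg id : ℝ × ℝ → ℝ × ℝ) :=
  (MeasurableEquiv.neg ℝ).measurableEmbedding.prodMap MeasurableEmbedding.id

lemma ae_snd_ne_zero : ∀ᵐ x : ℝ × ℝ, x.2 ≠ 0 := by
  have h : {x : ℝ × ℝ | ¬x.2 ≠ 0} = univ ×ˢ {0} := by ext; simp
  rw [ae_iff, h, Measure.volume_eq_prod, Measure.prod_prod, Real.volume_singleton, mul_zero]

lemma ae_fst_ne_zero : ∀ᵐ x : ℝ × ℝ, x.1 ≠ 0 := by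
  have h : {x : ℝ × ℝ | ¬x.1 ≠ 0} = {0} ×ˢ univ := by ext; simp
  rw [ae_iff, h, Measure.volume_eq_prod, Measure.prod_prod, Real.volume_singleton, zero_mul]

lemma volume_setOf_mul_abs_add_mul_abs_eq (a c : ℝ) {b : ℝ} (hb : b ≠ 0) :
    volume {x : ℝ × ℝ | a * |x.1| + b * |x.2| = c} = 0 := by
  have hm : MeasurableSet {x : ℝ × ℝ | a * |x.1| + b * |x.2| = c} :=
    measurableSet_eq_fun (by fun_prop) measurable_const
  rw [Measure.volume_eq_prod, Measure.measure_prod_null hm]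
  refine Eventually.of_forall fun t => measure_mono_null
    (t := {(c - a * |t|) / b, -((c - a * |t|) / b)}) ?_ ((toFinite _).measure_zero volume)
  intro y (hy : a * |t| + b * |y| = c)
  have : |y| = (c - a * |t|) / b := by field_simp; linarith
  rcases abs_choice y with h | h <;> simp [← this, h]

lemma isCompact_abs_add_abs_le (r : ℝ) : IsCompact {x : ℝ × ℝ | |x.1| + |x.2| ≤ r} := by
  refine Metric.isCompact_of_isClosed_isBounded (isClosed_le (by fun_prop) continuous_const)
    (Metric.isBounded_closedBall (x := 0) (r := r) |>.subset fun x (hx : |x.1| + |x.2| ≤ r) => ?_)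
  rw [mem_closedBall_zero_iff, Prod.norm_def, Real.norm_eq_abs, Real.norm_eq_abs, max_le_iff]
  constructor <;> linarith [abs_nonneg x.1, abs_nonneg x.2]

lemma measurableSet_Qset (n : ℕ) : MeasurableSet (Qset n) :=
  (isCompact_abs_add_abs_le _).isClosed.measurableSet

lemma abs_sign_eq_one {t : ℝ} (ht : t ≠ 0) : |(SignType.sign t : ℝ)| = 1 := by
  rcases ht.lt_or_gt with h | h <;> simp [sign_neg, sign_pos, h]

lemma apply_sign_add_apply_sign_neg {β : Type*} [AddCommMagma β] (h : ℝ → β) {t : ℝ} (ht : t ≠ 0) :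
    h (SignType.sign t) + h (SignType.sign (-t)) = h 1 + h (-1) := by
  rcases ht.lt_or_gt with ht | ht
  · rw [sign_neg ht, sign_pos (neg_pos.2 ht), add_comm]; simp
  · rw [sign_pos ht, sign_neg (neg_lt_zero.2 ht)]; simp

lemma StrictConvexOn.comp_linearEquiv {𝕜 E F β : Type*} [Semiring 𝕜] [PartialOrder 𝕜]
    [AddCommMonoid E] [AddCommMonoid F] [AddCommMonoid β] [PartialOrder β] [Module 𝕜 E]
    [Module 𝕜 F] [SMul 𝕜 β] {f : F → β} (hf : StrictConvexOn 𝕜 univ f) (e : E ≃ₗ[𝕜] F) :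
    StrictConvexOn 𝕜 univ (f ∘ e) :=
  ⟨convex_univ, fun x _ y _ hxy a b ha hb hab => by
    simpa only [Function.comp_apply, map_add, map_smul] using
      hf.2 trivial trivial (e.injective.ne hxy) ha hb hab⟩

lemma StrictConvexOn.eventually_add_neg_smul_lt {E : Type*} [NormedAddCommGroup E]
    [NormedSpace ℝ E] {σ : E → ℝ} (hσc : Continuous σ) (hσ : StrictConvexOn ℝ univ σ)
    (a : E) {b : E} (hb : b ≠ 0) :
    ∀ᶠ t in 𝓝 (0 : ℝ), σ (t • a) + σ (-(t • a)) < σ b + σ (-b) := by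
  have hb' : b ≠ -b := by
    intro h
    rw [eq_neg_iff_add_eq_zero, ← two_smul ℝ, smul_eq_zero] at h
    exact hb (h.resolve_left two_ne_zero)
  have hmid := hσ.2 trivial trivial hb' (by norm_num : (0 : ℝ) < 1 / 2)
    (by norm_num : (0 : ℝ) < 1 / 2) (by norm_num)
  rw [← smul_add, add_neg_cancel, smul_zero, smul_eq_mul, smul_eq_mul] at hmid
  refine ContinuousAt.eventually_lt (by fun_prop) continuousAt_const ?_
  simp only [zero_smul, neg_zero]
  linarith

lemma LipschitzWith.mul_abs_add {α : Type*} [PseudoMetricSpace α] {f : α → ℝ}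
    (hf : LipschitzWith 1 f) (a b : ℝ) : LipschitzWith ‖a‖₊ fun x => a * |f x| + b := by
  simpa using ((lipschitzWith_smul a).comp (lipschitzWith_one_norm.comp hf)).add
    (LipschitzWith.const b)

section Gradient

variable {ψ φ : ℝ × ℝ → ℝ} {x : ℝ × ℝ}

lemma HasFDerivAt.grad_eq {L : ℝ × ℝ →L[ℝ] ℝ} (h : HasFDerivAt ψ L x) :
    grad ψ x = (L (1, 0), L (0, 1)) := by
  rw [grad, h.fderiv]

lemma Filter.EventuallyEq.grad_eq (h : ψ =ᶠ[𝓝 x] φ) : grad ψ x = grad φ x := by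
  rw [grad, grad, h.fderiv_eq]

lemma measurable_grad : Measurable (grad ψ) :=
  (measurable_fderiv_apply_const ℝ ψ _).prodMk (measurable_fderiv_apply_const ℝ ψ _)

end Gradient

structure IsAdmissible (n : ℕ) (ψ : ℝ × ℝ → ℝ) : Prop where
  lipschitz : ∃ K : NNReal, LipschitzWith K ψ
  eq_psiBd : ∀ x ∈ bdQ n, ψ x = psiBd n x
  ae_grad_mem : ∀ᵐ x : ℝ × ℝ, x ∈ Qset n → DifferentiableAt ℝ ψ x ∧ grad ψ x ∈ NP n

lemma IsAdmissible.integrableOn {n : ℕ} {ψ : ℝ × ℝ → ℝ} (hψ : IsAdmissible n ψ)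
    {σ : ℝ × ℝ → ℝ} (hσ : Continuous σ) {s : Set (ℝ × ℝ)} (hs : s ⊆ Qset n) :
    IntegrableOn (fun x => σ (grad ψ x)) s := by
  obtain ⟨C, hC⟩ := (isCompact_abs_add_abs_le n).exists_bound_of_continuousOn hσ.continuousOn
  have hgrad : ∀ᵐ x ∂volume.restrict (Qset n), grad ψ x ∈ NP n :=
    (ae_restrict_iff' (measurableSet_Qset n)).2 (hψ.ae_grad_mem.mono fun x hx hxQ => (hx hxQ).2)
  exact Measure.integrableOn_of_bounded (ne_top_of_le_ne_top
    (isCompact_abs_add_abs_le _).measure_lt_top.ne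
    (measure_mono hs)) (hσ.measurable.comp measurable_grad).aestronglyMeasurable
    (ae_restrict_of_ae_restrict_of_subset hs (hgrad.mono fun x hx => hC _ hx))

section PsiPlus

variable {n : ℕ}

lemma hasFDerivAt_psiPlus {x : ℝ × ℝ} (hx : x.2 ≠ 0) :
    HasFDerivAt (psiPlus n) ((-(n * SignType.sign x.2 : ℝ)) • ContinuousLinearMap.snd ℝ ℝ ℝ) x :=
  (((hasDerivAt_abs hx).const_mul (n : ℝ)).const_sub (1 / 4)).comp_hasFDerivAt x hasFDerivAt_snd

lemma grad_psiPlus {x : ℝ × ℝ} (hx : x.2 ≠ 0) :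
    grad (psiPlus n) x = (0, -((n : ℝ) * SignType.sign x.2)) := by
  simp [(hasFDerivAt_psiPlus hx).grad_eq]

lemma psiPlus_eq_psiBd (hn : n ≠ 0) {x : ℝ × ℝ} (hx : x ∈ bdQ n) : psiPlus n x = psiBd n x := by
  have hx : |x.2| = 1 / (2 * n) - |x.1| := by rw [← hx]; ring
  have hn : (n : ℝ) ≠ 0 := Nat.cast_ne_zero.2 hn
  simp only [psiPlus, psiBd, hx]
  field_simp
  ring

lemma grad_psiPlus_mem_NP {x : ℝ × ℝ} (hx : x.2 ≠ 0) : grad (psiPlus n) x ∈ NP n := by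
  show |(grad (psiPlus n) x).1| + |(grad (psiPlus n) x).2| ≤ n
  simp [grad_psiPlus hx, abs_mul, abs_sign_eq_one hx]

lemma isAdmissible_psiPlus (hn : n ≠ 0) : IsAdmissible n (psiPlus n) where
  lipschitz := by
    have h : psiPlus n = fun x => -(n : ℝ) * |x.2| + 1 / 4 := by
      funext x; simp only [psiPlus]; ring
    exact ⟨_, h ▸ LipschitzWith.prod_snd.mul_abs_add _ _⟩
  eq_psiBd _ := psiPlus_eq_psiBd hn
  ae_grad_mem := ae_snd_ne_zero.mono fun x hx _ =>
    ⟨(hasFDerivAt_psiPlus hx).differentiableAt, grad_psiPlus_mem_NP hx⟩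

lemma setIntegral_grad_psiPlus {σ : ℝ × ℝ → ℝ} (hσ : Continuous σ) (hn : n ≠ 0)
    {s : Set (ℝ × ℝ)} (hsQ : s ⊆ Qset n) (hsm : MeasurableSet s)
    (hs : Prod.map id Neg.neg ⁻¹' s = s) :
    ∫ x in s, σ (grad (psiPlus n) x) = volume.real s / 2 * (σ (0, n) + σ (0, -n)) := by
  refine setIntegral_eq_half_mul_of_add_comp_ae_eq measurePreserving_prodMap_id_neg
    measurableEmbedding_prodMap_id_neg hsm hs ((isAdmissible_psiPlus hn).integrableOn hσ hsQ)
    (ae_snd_ne_zero.mono fun x hx _ => ?_)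
  have hx' : (Prod.map id Neg.neg x).2 ≠ 0 := neg_ne_zero.2 hx
  rw [grad_psiPlus hx, grad_psiPlus hx', Prod.map_snd,
    apply_sign_add_apply_sign_neg (fun t => σ (0, -(n * t))) hx]
  simp [add_comm]

end PsiPlus

section Competitor

variable {n : ℕ} {ε : ℝ} {x : ℝ × ℝ}

noncomputable def psiValley (n : ℕ) (ε : ℝ) (x : ℝ × ℝ) : ℝ := ε * n * |x.1| + (1 / 4 - ε / 2)

lemma hasFDerivAt_psiValley (hx : x.1 ≠ 0) :
    HasFDerivAt (psiValley n ε)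
      ((ε * n * SignType.sign x.1 : ℝ) • ContinuousLinearMap.fst ℝ ℝ ℝ) x :=
  (((hasDerivAt_abs hx).const_mul (ε * n)).add_const (1 / 4 - ε / 2)).comp_hasFDerivAt x
    hasFDerivAt_fst

lemma grad_psiValley (hx : x.1 ≠ 0) :
    grad (psiValley n ε) x = (ε * n * (SignType.sign x.1 : ℝ), 0) := by
  simp [(hasFDerivAt_psiValley hx).grad_eq]

noncomputable def psiEps (n : ℕ) (ε : ℝ) (x : ℝ × ℝ) : ℝ := min (psiPlus n x) (psiValley n ε x)

def Rset (n : ℕ) (ε : ℝ) : Set (ℝ × ℝ) := {x | ε * n * |x.1| + n * |x.2| < ε / 2}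

lemma isOpen_Rset : IsOpen (Rset n ε) := isOpen_lt (by fun_prop) continuous_const

lemma Rset_subset_Qset (hn : n ≠ 0) (hε : 0 ≤ ε) (hε1 : ε ≤ 1) : Rset n ε ⊆ Qset n := by
  intro x (hx : ε * n * |x.1| + n * |x.2| < ε / 2)
  have hn : (0 : ℝ) < n := by positivity
  have h2 : (0 : ℝ) ≤ n * |x.2| := by positivity
  have h1 : n * |x.1| < (1 / 2 : ℝ) := by
    by_contra! h
    nlinarith [mul_le_mul_of_nonneg_left h hε]
  show |x.1| + |x.2| ≤ 1 / (2 * n)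
  rw [le_div_iff₀ (by positivity)]
  nlinarith [mul_nonneg (sub_nonneg.2 hε1) (sub_nonneg.2 h1.le)]

lemma zero_mem_Rset (hε : 0 < ε) : (0 : ℝ × ℝ) ∈ Rset n ε := by
  show ε * n * |(0 : ℝ)| + n * |(0 : ℝ)| < ε / 2
  simpa using hε

lemma preimage_prodMap_Rset (f g : ℝ → ℝ) (hf : ∀ t, |f t| = |t|) (hg : ∀ t, |g t| = |t|) :
    Prod.map f g ⁻¹' Rset n ε = Rset n ε := by
  ext x; simp [Rset, hf, hg]

lemma psiEps_eventuallyEq_psiValley (hx : x ∈ Rset n ε) : psiEps n ε =ᶠ[𝓝 x] psiValley n ε :=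
  eventually_of_mem (isOpen_Rset.mem_nhds hx) fun y (hy : ε * n * |y.1| + n * |y.2| < ε / 2) =>
    min_eq_right (by simp only [psiPlus, psiValley]; linarith)

lemma psiEps_eventuallyEq_psiPlus (hx : ε / 2 < ε * n * |x.1| + n * |x.2|) :
    psiEps n ε =ᶠ[𝓝 x] psiPlus n :=
  eventually_of_mem ((isOpen_lt continuous_const
      (by fun_prop : Continuous fun y : ℝ × ℝ => ε * n * |y.1| + n * |y.2|)).mem_nhds hx)
    fun y (hy : ε / 2 < ε * n * |y.1| + n * |y.2|) =>
      min_eq_left (by simp only [psiPlus, psiValley]; linarith)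

lemma grad_psiEps_of_mem_Rset (hx : x ∈ Rset n ε) (hx1 : x.1 ≠ 0) :
    grad (psiEps n ε) x = (ε * n * (SignType.sign x.1 : ℝ), 0) :=
  (psiEps_eventuallyEq_psiValley hx).grad_eq.trans (grad_psiValley hx1)

lemma ae_mem_Rset_or_lt (hn : n ≠ 0) :
    ∀ᵐ x : ℝ × ℝ, x ∈ Rset n ε ∨ ε / 2 < ε * n * |x.1| + n * |x.2| := by
  refine ae_iff.2 (measure_mono_null (fun x (hx : ¬(_ ∨ _)) => ?_)
    (volume_setOf_mul_abs_add_mul_abs_eq (ε * n) (ε / 2) (Nat.cast_ne_zero.2 hn)))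
  rw [not_or] at hx
  exact le_antisymm (not_lt.1 hx.2) (not_lt.1 hx.1)

lemma psiPlus_le_psiValley_of_mem_bdQ (hn : n ≠ 0) (hε1 : ε ≤ 1) (hx : x ∈ bdQ n) :
    psiPlus n x ≤ psiValley n ε x := by
  have hn : (n : ℝ) ≠ 0 := Nat.cast_ne_zero.2 hn
  have hsum : (n : ℝ) * |x.1| + n * |x.2| = 1 / 2 := by
    rw [← mul_add, show |x.1| + |x.2| = 1 / (2 * n) from hx]; field_simp
  have h1 : (n : ℝ) * |x.1| ≤ 1 / 2 := by
    have : (0 : ℝ) ≤ n * |x.2| := by positivity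
    linarith
  simp only [psiPlus, psiValley]
  nlinarith [mul_nonneg (sub_nonneg.2 hε1) (sub_nonneg.2 h1)]

lemma isAdmissible_psiEps (hn : n ≠ 0) (hε : 0 < ε) (hε1 : ε ≤ 1) :
    IsAdmissible n (psiEps n ε) where
  lipschitz := by
    obtain ⟨K, hK⟩ := (isAdmissible_psiPlus hn).lipschitz
    exact ⟨_, hK.min (LipschitzWith.prod_fst.mul_abs_add (ε * n) (1 / 4 - ε / 2))⟩
  eq_psiBd x hx := by
    rw [psiEps, min_eq_left (psiPlus_le_psiValley_of_mem_bdQ hn hε1 hx), psiPlus_eq_psiBd hn hx]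
  ae_grad_mem := by
    filter_upwards [ae_fst_ne_zero, ae_snd_ne_zero, ae_mem_Rset_or_lt hn] with x hx1 hx2 hx _
    rcases hx with hR | hS
    · refine ⟨(psiEps_eventuallyEq_psiValley hR).differentiableAt_iff.2
        (hasFDerivAt_psiValley hx1).differentiableAt, ?_⟩
      show |(grad (psiEps n ε) x).1| + |(grad (psiEps n ε) x).2| ≤ n
      rw [grad_psiEps_of_mem_Rset hR hx1]
      simp only [abs_mul, abs_sign_eq_one hx1, abs_zero, add_zero, mul_one, Nat.abs_cast,
        abs_of_pos hε]
      exact mul_le_of_le_one_left (Nat.cast_nonneg n) hε1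
    · rw [(psiEps_eventuallyEq_psiPlus hS).differentiableAt_iff,
        (psiEps_eventuallyEq_psiPlus hS).grad_eq]
      exact ⟨(hasFDerivAt_psiPlus hx2).differentiableAt, grad_psiPlus_mem_NP hx2⟩

lemma setIntegral_grad_psiEps {σ : ℝ × ℝ → ℝ} (hσ : Continuous σ) (hn : n ≠ 0) (hε : 0 < ε)
    (hε1 : ε ≤ 1) :
    ∫ x in Qset n, σ (grad (psiEps n ε) x) = (∫ x in Qset n, σ (grad (psiPlus n) x)) -
      volume.real (Rset n ε) / 2 *
        (σ (0, n) + σ (0, -n) - (σ (ε * n, 0) + σ (-(ε * n), 0))) := by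
  have hRm : MeasurableSet (Rset n ε) := isOpen_Rset.measurableSet
  have hRQ := Rset_subset_Qset hn hε.le hε1
  have hψ := isAdmissible_psiEps hn hε hε1
  have hψR : ∫ x in Rset n ε, σ (grad (psiEps n ε) x) =
      volume.real (Rset n ε) / 2 * (σ (ε * n, 0) + σ (-(ε * n), 0)) := by
    refine setIntegral_eq_half_mul_of_add_comp_ae_eq measurePreserving_prodMap_neg_id
      measurableEmbedding_prodMap_neg_id hRm (preimage_prodMap_Rset Neg.neg id abs_neg fun _ => rfl)
      (hψ.integrableOn hσ hRQ) (ae_fst_ne_zero.mono fun x hx hxR => ?_)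
    have hxR' : Prod.map Neg.neg id x ∈ Rset n ε := by
      rwa [← mem_preimage, preimage_prodMap_Rset Neg.neg id abs_neg fun _ => rfl]
    rw [grad_psiEps_of_mem_Rset hxR hx, grad_psiEps_of_mem_Rset hxR' (neg_ne_zero.2 hx),
      Prod.map_fst, apply_sign_add_apply_sign_neg (fun t => σ (ε * n * t, 0)) hx]
    simp
  have hψQR : ∫ x in Qset n \ Rset n ε, σ (grad (psiEps n ε) x) =
      ∫ x in Qset n \ Rset n ε, σ (grad (psiPlus n) x) :=
    setIntegral_congr_ae ((measurableSet_Qset n).diff hRm) <|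
      (ae_mem_Rset_or_lt hn).mono fun x hx hxQR => by
        rw [(psiEps_eventuallyEq_psiPlus (hx.resolve_left hxQR.2)).grad_eq]
  rw [← integral_inter_add_sdiff hRm (hψ.integrableOn hσ subset_rfl),
    ← integral_inter_add_sdiff hRm ((isAdmissible_psiPlus hn).integrableOn hσ subset_rfl),
    inter_eq_right.2 hRQ, hψR, hψQR, setIntegral_grad_psiPlus hσ hn hRQ hRm
      (preimage_prodMap_Rset id Neg.neg (fun _ => rfl) abs_neg)]
  ring

lemma volume_real_Rset_pos (hn : n ≠ 0) (hε : 0 < ε) (hε1 : ε ≤ 1) :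
    0 < volume.real (Rset n ε) :=
  ENNReal.toReal_pos (isOpen_Rset.measure_ne_zero volume ⟨0, zero_mem_Rset hε⟩)
    (ne_top_of_le_ne_top (isCompact_abs_add_abs_le _).measure_lt_top.ne
      (measure_mono (Rset_subset_Qset hn hε.le hε1)))

end Competitor

theorem exists_isAdmissible_lt_psiPlus {n : ℕ} (hn : n ≠ 0) {σ : ℝ × ℝ → ℝ}
    (hσc : Continuous σ) (hσ : StrictConvexOn ℝ univ σ) :
    ∃ ψ, IsAdmissible n ψ ∧
      ∫ x in Qset n, σ (grad ψ x) < ∫ x in Qset n, σ (grad (psiPlus n) x) := by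
  have hσε := hσ.eventually_add_neg_smul_lt hσc ((n : ℝ), (0 : ℝ))
    (b := ((0 : ℝ), (n : ℝ))) (by simpa using hn)
  obtain ⟨ε, hlt, hε, hε1⟩ :=
    ((hσε.filter_mono nhdsWithin_le_nhds).and (Ioc_mem_nhdsGT zero_lt_one)).exists
  refine ⟨psiEps n ε, isAdmissible_psiEps hn hε hε1, ?_⟩
  rw [setIntegral_grad_psiEps hσc hn hε hε1, sub_lt_self_iff]
  simp only [Prod.smul_mk, smul_eq_mul, mul_zero, Prod.neg_mk, neg_zero] at hlt
  exact mul_pos (half_pos (volume_real_Rset_pos hn hε hε1)) (sub_pos.2 hlt)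

section Reflection

variable {n : ℕ} {ψ : ℝ × ℝ → ℝ} {x : ℝ × ℝ}

def swapNeg (ψ : ℝ × ℝ → ℝ) (x : ℝ × ℝ) : ℝ := -ψ x.swap

lemma swapNeg_eq_neg_comp : swapNeg ψ = -(ψ ∘ ContinuousLinearEquiv.prodComm ℝ ℝ ℝ) := rfl

lemma differentiableAt_swapNeg_iff :
    DifferentiableAt ℝ (swapNeg ψ) x ↔ DifferentiableAt ℝ ψ x.swap := by
  rw [swapNeg_eq_neg_comp, differentiableAt_neg_iff,
    ContinuousLinearEquiv.comp_right_differentiableAt_iff]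
  rfl

lemma grad_swapNeg : grad (swapNeg ψ) x = -(grad ψ x.swap).swap := by
  rw [grad, grad, swapNeg_eq_neg_comp, fderiv_neg, ContinuousLinearEquiv.comp_right_fderiv]
  simp

lemma preimage_swap_Qset : Prod.swap ⁻¹' Qset n = Qset n := by
  ext x; simp [Qset, add_comm]

lemma isAdmissible_swapNeg (hψ : IsAdmissible n ψ) : IsAdmissible n (swapNeg ψ) where
  lipschitz := by
    obtain ⟨K, hK⟩ := hψ.lipschitz
    exact ⟨_, (hK.comp (LipschitzWith.prod_snd.prodMk LipschitzWith.prod_fst)).neg⟩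
  eq_psiBd x hx := by
    have hx' : x.swap ∈ bdQ n := by simpa [bdQ, add_comm] using hx
    rw [swapNeg, hψ.eq_psiBd _ hx', psiBd, psiBd, Prod.fst_swap, Prod.snd_swap]
    ring
  ae_grad_mem := by
    filter_upwards [Measure.measurePreserving_swap.quasiMeasurePreserving.ae hψ.ae_grad_mem]
      with x hx hxQ
    obtain ⟨hd, hmem⟩ := hx (by rwa [← mem_preimage, preimage_swap_Qset])
    refine ⟨differentiableAt_swapNeg_iff.2 hd, ?_⟩
    simpa [NP, grad_swapNeg, add_comm] using hmem

lemma setIntegral_grad_swapNeg (σ : ℝ × ℝ → ℝ) (ψ : ℝ × ℝ → ℝ) :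
    ∫ x in Qset n, σ (grad (swapNeg ψ) x) = ∫ x in Qset n, σ (-(grad ψ x).swap) := by
  simp_rw [grad_swapNeg]
  exact Measure.measurePreserving_swap.setIntegral_comp_of_preimage_eq
    MeasurableEquiv.prodComm.measurableEmbedding
    preimage_swap_Qset fun y => σ (-(grad ψ y).swap)

lemma psiMinus_eq_swapNeg_psiPlus : psiMinus n = swapNeg (psiPlus n) := by
  funext x
  simp only [psiMinus, swapNeg, psiPlus, Prod.snd_swap]
  ring

end Reflection

/-- for continuous strictly convex `σ` there is a Lipschitz `ψ` with the
boundary value `ψ_∂Q`, gradient a.e. in `N`, whose surface-tension functional is strictly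
smaller than that of `ψ⁺`; moreover `∫_Q σ(∇ψ⁺) = (|Q|/2)(σ(0,n)+σ(0,−n))`. In particular
`ψ⁺` is not the minimizer; the analogous statement holds for `ψ⁻`. -/
theorem stmt_3 (n : ℕ) (hn : 1 ≤ n) (σ : ℝ × ℝ → ℝ)
    (hσc : Continuous σ) (hσ : StrictConvexOn ℝ Set.univ σ) :
    (∃ (K : NNReal) (ψ : ℝ × ℝ → ℝ), LipschitzWith K ψ ∧
      (∀ x ∈ bdQ n, ψ x = psiBd n x) ∧
      (∀ᵐ x : ℝ × ℝ ∂volume, x ∈ Qset n → DifferentiableAt ℝ ψ x ∧ grad ψ x ∈ NP n) ∧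
      ∫ x in Qset n, σ (grad ψ x) < ∫ x in Qset n, σ (grad (psiPlus n) x)) ∧
    (∫ x in Qset n, σ (grad (psiPlus n) x)
        = (volume (Qset n)).toReal / 2 * (σ (0, (n : ℝ)) + σ (0, -(n : ℝ)))) ∧
    (∃ (K : NNReal) (ψ : ℝ × ℝ → ℝ), LipschitzWith K ψ ∧
      (∀ x ∈ bdQ n, ψ x = psiBd n x) ∧
      (∀ᵐ x : ℝ × ℝ ∂volume, x ∈ Qset n → DifferentiableAt ℝ ψ x ∧ grad ψ x ∈ NP n) ∧
      ∫ x in Qset n, σ (grad ψ x) < ∫ x in Qset n, σ (grad (psiMinus n) x)) ∧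
    (∫ x in Qset n, σ (grad (psiMinus n) x)
        = (volume (Qset n)).toReal / 2 * (σ ((n : ℝ), 0) + σ (-(n : ℝ), 0))) := by
  have hn : n ≠ 0 := Nat.one_le_iff_ne_zero.1 hn
  have hQ : Prod.map id Neg.neg ⁻¹' Qset n = Qset n := by ext; simp [Qset]
  set σ' : ℝ × ℝ → ℝ := fun ρ => σ (-ρ.swap)
  have hσ' : StrictConvexOn ℝ univ σ' :=
    hσ.comp_linearEquiv ((LinearEquiv.prodComm ℝ ℝ ℝ).trans (LinearEquiv.neg ℝ))
  obtain ⟨ψ, hψ, hlt⟩ := exists_isAdmissible_lt_psiPlus hn hσc hσ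
  obtain ⟨ψ', hψ', hlt'⟩ := exists_isAdmissible_lt_psiPlus hn (by fun_prop) hσ'
  obtain ⟨K, hK⟩ := hψ.lipschitz
  have hψ'' := isAdmissible_swapNeg hψ'
  obtain ⟨K', hK'⟩ := hψ''.lipschitz
  refine ⟨⟨K, ψ, hK, hψ.eq_psiBd, hψ.ae_grad_mem, hlt⟩,
    setIntegral_grad_psiPlus hσc hn subset_rfl (measurableSet_Qset n) hQ,
    ⟨K', swapNeg ψ', hK', hψ''.eq_psiBd, hψ''.ae_grad_mem, ?_⟩, ?_⟩
  · rwa [psiMinus_eq_swapNeg_psiPlus, setIntegral_grad_swapNeg, setIntegral_grad_swapNeg]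
  · rw [psiMinus_eq_swapNeg_psiPlus, setIntegral_grad_swapNeg,
      setIntegral_grad_psiPlus (σ := σ') (by fun_prop) hn subset_rfl (measurableSet_Qset n) hQ]
    simp [σ', add_comm, measureReal_def]
end

section
/- Let a, b ∈ ℂ be linearly independent over ℝ, and let χ : [0,∞) → ℝ be continuous with compact support. Then the function (θ,φ) ↦ χ(|aθ + bφ|)/(aθ + bφ), defined to be 0 at points where aθ + bφ = 0, is Lebesgue integrable on ℝ², and ∫_{ℝ²} χ(|aθ + bφ|)/(aθ + bφ) dθ dφ = 0. -/
/-!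
The linear isomorphism `(θ, φ) ↦ aθ + bφ` carries Lebesgue measure on `ℝ²` to a Haar measure on
`ℂ`, so integrability reduces to that of `z ↦ χ(|z|)/z` for a Haar measure on `ℂ`; this holds
because in polar coordinates the area element `r dr dθ` absorbs the singularity `1/|z|`. The
integral vanishes since the integrand is odd and Lebesgue measure is invariant under `p ↦ -p`.
-/

open MeasureTheory Measure Set

theorem integral_eq_zero_of_odd {G E : Type*} [MeasurableSpace G] [AddGroup G] [MeasurableNeg G]
    [NormedAddCommGroup E] [NormedSpace ℝ E] (μ : Measure G) [μ.IsNegInvariant] {f : G → E}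
    (hf : ∀ x, f (-x) = -f x) : ∫ x, f x ∂μ = 0 := by
  have hself : ∫ x, f x ∂μ = -∫ x, f x ∂μ :=
    calc ∫ x, f x ∂μ = ∫ x, f (-x) ∂μ := (integral_neg_eq_self f μ).symm
      _ = -∫ x, f x ∂μ := by simp only [hf, integral_neg]
  have htwice : (2 : ℝ) • ∫ x, f x ∂μ = 0 := by
    rw [two_smul]
    nth_rewrite 2 [hself]
    exact add_neg_cancel _
  exact (smul_eq_zero.1 htwice).resolve_left two_ne_zero

theorem integrable_ofReal_comp_norm_div_self (μ : Measure ℂ) [μ.IsAddHaarMeasure] {χ : ℝ → ℝ}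
    (hχm : Measurable χ) (hχ : IntegrableOn χ (Ioi 0)) :
    Integrable (fun z : ℂ => (χ ‖z‖ : ℂ) / z) μ := by
  have hradial : Integrable (fun z : ℂ => χ ‖z‖ / ‖z‖) μ := by
    refine (integrable_fun_norm_addHaar μ (f := fun r => χ r / r)).2 ?_
    refine hχ.congr_fun (fun r (hr : 0 < r) => ?_) measurableSet_Ioi
    simp [Complex.finrank_real_complex, mul_div_cancel₀ _ hr.ne']
  refine hradial.mono ?_ (ae_of_all _ fun z => ?_)
  · exact ((Complex.measurable_ofReal.comp (hχm.comp measurable_norm)).div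
      measurable_id).aestronglyMeasurable
  · simp [norm_div]

theorem LinearIndependent.exists_linearEquiv_prod_apply {K V : Type*} [Field K] [AddCommGroup V]
    [Module K V] {x y : V} (hxy : LinearIndependent K ![x, y]) (hV : Module.finrank K V = 2) :
    ∃ e : (K × K) ≃ₗ[K] V, ∀ p, e p = p.1 • x + p.2 • y := by
  have := FiniteDimensional.of_finrank_eq_succ hV
  let L : K × K →ₗ[K] V :=
    (LinearMap.toSpanSingleton K V x).coprod (LinearMap.toSpanSingleton K V y)
  have hL : Function.Injective L := by
    refine (injective_iff_map_eq_zero L).2 fun p hp => ?_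
    obtain ⟨h1, h2⟩ := LinearIndependent.pair_iff.1 hxy p.1 p.2 hp
    exact Prod.ext h1 h2
  exact ⟨LinearEquiv.ofInjectiveOfFinrankEq L hL (by simp [hV]), fun p => rfl⟩

/-- let `a, b ∈ ℂ` be linearly independent over `ℝ`, and let `χ` be continuous
with compact support. Then `(θ,φ) ↦ χ(|aθ + bφ|)/(aθ + bφ)` (equal to `0` where
`aθ + bφ = 0`, which is the Lean convention for division by zero) is Lebesgue integrable on
`ℝ²` and its integral vanishes. -/
theorem stmt_5 (a b : ℂ) (hab : LinearIndependent ℝ ![a, b])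
    (χ : ℝ → ℝ) (hχ : Continuous χ) (hsupp : HasCompactSupport χ) :
    Integrable (fun p : ℝ × ℝ =>
      (χ (‖a * p.1 + b * p.2‖) : ℂ) / (a * p.1 + b * p.2)) ∧
    ∫ p : ℝ × ℝ, (χ (‖a * p.1 + b * p.2‖) : ℂ) / (a * p.1 + b * p.2) = 0 := by
  obtain ⟨e, he⟩ := hab.exists_linearEquiv_prod_apply Complex.finrank_real_complex
  let e' : (ℝ × ℝ) ≃L[ℝ] ℂ := e.toContinuousLinearEquiv
  have he' : ∀ p : ℝ × ℝ, e' p = a * p.1 + b * p.2 := fun p => by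
    simp [e', he, Complex.real_smul, mul_comm]
  have := e'.isAddHaarMeasure_map volume
  refine ⟨?_, integral_eq_zero_of_odd volume fun p => ?_⟩
  · have hint := integrable_ofReal_comp_norm_div_self (map e' volume) hχ.measurable
      (hχ.integrable_of_hasCompactSupport hsupp).integrableOn
    simpa [Function.comp_def, he'] using
      e'.toHomeomorph.measurableEmbedding.integrable_map_iff.1 hint
  · simp only [Prod.fst_neg, Prod.snd_neg, Complex.ofReal_neg, mul_neg, ← neg_add, norm_neg,
      div_neg]
end

section
/- Let U, W ⊂ ℝ² be open, let ψ : W → ℝ be twice continuously differentiable, and let x : U → W be continuously differentiable with ∇ψ(x(ρ)) = ρ for every ρ ∈ U, and set v(ρ) = ψ(x(ρ)) − x(ρ)·ρ. Suppose that for some ρ₀ ∈ U there exists a symmetric positive definite 2×2 matrix S such that S₁₁ ∂²ψ/∂x₁² + 2S₁₂ ∂²ψ/∂x₁∂x₂ + S₂₂ ∂²ψ/∂x₂² = 0 at the point x(ρ₀). Then v is twice differentiable at ρ₀ and det D²v(ρ₀) < 0. -/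
/-!
Since `∇ψ(x(ρ)) = ρ`, the terms of `Dv` involving `Dx` cancel and `Dv(ρ) = -x(ρ)`, so
`D²v(ρ₀) = -Dx(ρ₀)`; differentiating `∇ψ(x(ρ)) = ρ` gives `D²ψ(x(ρ₀)) Dx(ρ₀) = 1`. Hence
`D²v(ρ₀) = -D²ψ(x(ρ₀))⁻¹` and `det D²v(ρ₀) · det D²ψ(x(ρ₀)) = 1`. The Euler–Lagrange equation
says `tr (S D²ψ) = 0` with `S` positive definite, which rules out `det D²ψ > 0` for a symmetric
`2 × 2` matrix.
-/

/-- The Hessian matrix `D²ψ(y)` of `ψ : ℝ² → ℝ`, with entries the iterated directional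
derivatives along the coordinate directions. -/
noncomputable def hessian (ψ : ℝ × ℝ → ℝ) (y : ℝ × ℝ) : Matrix (Fin 2) (Fin 2) ℝ :=
  Matrix.of fun i j =>
    fderiv ℝ (fun z => fderiv ℝ ψ z (if j = 0 then ((1 : ℝ), (0 : ℝ)) else (0, 1))) y
      (if i = 0 then ((1 : ℝ), (0 : ℝ)) else (0, 1))

open Filter Topology ContinuousLinearMap

theorem Matrix.PosDef.det_nonpos_of_trace_mul_eq_zero {S A : Matrix (Fin 2) (Fin 2) ℝ}
    (hS : S.PosDef) (hA : A.IsSymm) (h : (S * A).trace = 0) : A.det ≤ 0 := by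
  have hS₀₀ : 0 < S 0 0 := hS.diag_pos
  have hS₁₁ : 0 < S 1 1 := hS.diag_pos
  have hS₁₀ : S 1 0 = S 0 1 := hS.isHermitian.apply 0 1
  have hA₁₀ : A 1 0 = A 0 1 := hA.apply 0 1
  have hdetS : 0 < S 0 0 * S 1 1 - S 0 1 * S 0 1 := by
    simpa [Matrix.det_fin_two, hS₁₀] using hS.det_pos
  rw [Matrix.trace_fin_two, Matrix.mul_apply, Matrix.mul_apply, Fin.sum_univ_two,
    Fin.sum_univ_two, hS₁₀, hA₁₀] at h
  rw [Matrix.det_fin_two, hA₁₀]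
  -- If `det A > 0`, then `A₀₀, A₁₁` have the same sign and
  -- `(S₀₀A₀₀ + S₁₁A₁₁)² ≥ 4 S₀₀S₁₁ A₀₀A₁₁ > 4 S₀₁² A₀₁²`, contradicting `tr (S A) = 0`.
  by_contra! hpos
  have hsq : (S 0 0 * A 0 0 + S 1 1 * A 1 1) ^ 2 = (2 * S 0 1 * A 0 1) ^ 2 := by
    rw [show S 0 0 * A 0 0 + S 1 1 * A 1 1 = -(2 * S 0 1 * A 0 1) by linear_combination h]
    ring
  nlinarith [sq_nonneg (S 0 0 * A 0 0 - S 1 1 * A 1 1), mul_pos (mul_pos hS₀₀ hS₁₁) hpos,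
    mul_nonneg hdetS.le (sq_nonneg (A 0 1))]

section Legendre

variable {E F : Type*} [NormedAddCommGroup E] [NormedSpace ℝ E]
  [NormedAddCommGroup F] [NormedSpace ℝ F]
  {B : F →L[ℝ] E →L[ℝ] ℝ} {ψ : E → ℝ} {x : F → E} {x' : F →L[ℝ] E} {ρ ρ₀ : F}

theorem hasFDerivAt_legendre (hψ : HasFDerivAt ψ (B ρ) (x ρ)) (hx : HasFDerivAt x x' ρ) :
    HasFDerivAt (fun ρ => ψ (x ρ) - B ρ (x ρ)) (-B.flip (x ρ)) ρ := by
  have h := (hψ.comp ρ hx).sub (B.hasFDerivAt.clm_apply hx)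
  rwa [sub_add_cancel_left] at h

theorem hasFDerivAt_fderiv_legendre
    (h : ∀ᶠ ρ in 𝓝 ρ₀, HasFDerivAt ψ (B ρ) (x ρ) ∧ DifferentiableAt ℝ x ρ)
    (hx : HasFDerivAt x x' ρ₀) :
    HasFDerivAt (fderiv ℝ fun ρ => ψ (x ρ) - B ρ (x ρ)) (-B.flip.comp x') ρ₀ := by
  refine (B.flip.hasFDerivAt.comp ρ₀ hx).neg.congr_of_eventuallyEq ?_
  filter_upwards [h] with ρ hρ
  exact (hasFDerivAt_legendre hρ.1 hρ.2.hasFDerivAt).fderiv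

end Legendre

noncomputable def dotL : (ℝ × ℝ) →L[ℝ] (ℝ × ℝ) →L[ℝ] ℝ :=
  (fst ℝ ℝ ℝ).smulRight (fst ℝ ℝ ℝ) + (snd ℝ ℝ ℝ).smulRight (snd ℝ ℝ ℝ)

@[simp]
theorem dotL_apply (ρ y : ℝ × ℝ) : dotL ρ y = y.1 * ρ.1 + y.2 * ρ.2 := by
  simp [dotL, mul_comm]

theorem eq_dotL_of_apply {L : (ℝ × ℝ) →L[ℝ] ℝ} {ρ : ℝ × ℝ} (h₁ : L (1, 0) = ρ.1)
    (h₂ : L (0, 1) = ρ.2) : L = dotL ρ :=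
  prod_ext (ext_ring (by simpa using h₁)) (ext_ring (by simpa using h₂))

theorem ContinuousLinearMap.apply_eq_fst_smul_add_snd_smul {R M : Type*} [Semiring R]
    [TopologicalSpace R] [AddCommMonoid M] [Module R M] [TopologicalSpace M]
    (L : R × R →L[R] M) (u : R × R) : L u = u.1 • L (1, 0) + u.2 • L (0, 1) := by
  conv_lhs => rw [show u = u.1 • (1, 0) + u.2 • (0, 1) by ext <;> simp]
  rw [map_add, map_smul, map_smul]

theorem hessian_apply_of_hasFDerivAt {f : ℝ × ℝ → ℝ} {T : (ℝ × ℝ) →L[ℝ] (ℝ × ℝ) →L[ℝ] ℝ}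
    {y : ℝ × ℝ} (hf : HasFDerivAt (fderiv ℝ f) T y) (i j : Fin 2) :
    hessian f y i j = T (Module.Basis.finTwoProd ℝ i) (Module.Basis.finTwoProd ℝ j) := by
  have hw (w : ℝ × ℝ) : HasFDerivAt (fun z => fderiv ℝ f z w) (T.flip w) y := by
    simpa using hf.clm_apply (hasFDerivAt_const w y)
  fin_cases i <;> fin_cases j <;> simp [hessian, (hw _).fderiv]

theorem hessian_isSymm {f : ℝ × ℝ → ℝ} {y : ℝ × ℝ} (hf : ContDiffAt ℝ 2 f y) :
    (hessian f y).IsSymm := by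
  have hT := ((hf.fderiv_right one_add_one_eq_two.le).differentiableAt one_ne_zero).hasFDerivAt
  refine Matrix.IsSymm.ext fun i j => ?_
  rw [hessian_apply_of_hasFDerivAt hT, hessian_apply_of_hasFDerivAt hT]
  exact hf.isSymmSndFDerivAt (by simp) _ _

theorem hessian_legendre_mul_hessian {ψ : ℝ × ℝ → ℝ} {x : ℝ × ℝ → ℝ × ℝ}
    {x' : (ℝ × ℝ) →L[ℝ] ℝ × ℝ} {ρ₀ : ℝ × ℝ}
    (h : ∀ᶠ ρ in 𝓝 ρ₀, HasFDerivAt ψ (dotL ρ) (x ρ) ∧ DifferentiableAt ℝ x ρ)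
    (hx : HasFDerivAt x x' ρ₀) (hψ : DifferentiableAt ℝ (fderiv ℝ ψ) (x ρ₀)) :
    hessian (fun ρ => ψ (x ρ) - dotL ρ (x ρ)) ρ₀ * hessian ψ (x ρ₀) = -1 := by
  set T := fderiv ℝ (fderiv ℝ ψ) (x ρ₀)
  have hTx : T.comp x' = dotL :=
    (hψ.hasFDerivAt.comp ρ₀ hx).unique
      (dotL.hasFDerivAt.congr_of_eventuallyEq (h.mono fun ρ hρ => hρ.1.fderiv))
  ext i j
  have hij := congr($hTx (Module.Basis.finTwoProd ℝ i) (Module.Basis.finTwoProd ℝ j))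
  rw [comp_apply, T.apply_eq_fst_smul_add_snd_smul, add_apply, smul_apply,
    smul_apply, smul_eq_mul, smul_eq_mul] at hij
  rw [Matrix.mul_apply, Fin.sum_univ_two, hessian_apply_of_hasFDerivAt hψ.hasFDerivAt,
    hessian_apply_of_hasFDerivAt hψ.hasFDerivAt,
    hessian_apply_of_hasFDerivAt (hasFDerivAt_fderiv_legendre h hx),
    hessian_apply_of_hasFDerivAt (hasFDerivAt_fderiv_legendre h hx)]
  fin_cases i <;> fin_cases j <;> simp_all <;> linarith

theorem stmt_11_general (U W : Set (ℝ × ℝ)) (hU : IsOpen U) (hW : IsOpen W)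
    (ψ : ℝ × ℝ → ℝ) (hψ : ContDiffOn ℝ 2 ψ W)
    (x : ℝ × ℝ → ℝ × ℝ) (hxW : Set.MapsTo x U W) (hx : ContDiffOn ℝ 1 x U)
    (hgrad : ∀ ρ ∈ U,
      fderiv ℝ ψ (x ρ) (1, 0) = ρ.1 ∧ fderiv ℝ ψ (x ρ) (0, 1) = ρ.2)
    (ρ₀ : ℝ × ℝ) (hρ₀ : ρ₀ ∈ U)
    (S : Matrix (Fin 2) (Fin 2) ℝ) (hSpd : S.PosDef)
    (hEL : S 0 0 * hessian ψ (x ρ₀) 0 0 + 2 * S 0 1 * hessian ψ (x ρ₀) 0 1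
        + S 1 1 * hessian ψ (x ρ₀) 1 1 = 0) :
    DifferentiableOn ℝ (fun ρ => ψ (x ρ) - ((x ρ).1 * ρ.1 + (x ρ).2 * ρ.2)) U ∧
    DifferentiableAt ℝ
      (fun ρ => fderiv ℝ (fun ρ' => ψ (x ρ') - ((x ρ').1 * ρ'.1 + (x ρ').2 * ρ'.2)) ρ) ρ₀ ∧
    (hessian (fun ρ' => ψ (x ρ') - ((x ρ').1 * ρ'.1 + (x ρ').2 * ρ'.2)) ρ₀).det < 0 := by
  have hψ₂ (ρ) (hρ : ρ ∈ U) : ContDiffAt ℝ 2 ψ (x ρ) :=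
    hψ.contDiffAt (hW.mem_nhds (hxW hρ))
  have hx₁ (ρ) (hρ : ρ ∈ U) : HasFDerivAt x (fderiv ℝ x ρ) ρ :=
    ((hx.contDiffAt (hU.mem_nhds hρ)).differentiableAt one_ne_zero).hasFDerivAt
  have hgradL (ρ) (hρ : ρ ∈ U) : HasFDerivAt ψ (dotL ρ) (x ρ) := by
    rw [← eq_dotL_of_apply (hgrad ρ hρ).1 (hgrad ρ hρ).2]
    exact ((hψ₂ ρ hρ).differentiableAt two_ne_zero).hasFDerivAt
  have hnear : ∀ᶠ ρ in 𝓝 ρ₀, HasFDerivAt ψ (dotL ρ) (x ρ) ∧ DifferentiableAt ℝ x ρ :=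
    eventually_of_mem (hU.mem_nhds hρ₀) fun ρ hρ => ⟨hgradL ρ hρ, (hx₁ ρ hρ).differentiableAt⟩
  have hv : (fun ρ => ψ (x ρ) - ((x ρ).1 * ρ.1 + (x ρ).2 * ρ.2)) =
      fun ρ => ψ (x ρ) - dotL ρ (x ρ) := by simp
  rw [hv]
  refine ⟨fun ρ hρ => (hasFDerivAt_legendre (hgradL ρ hρ) (hx₁ ρ hρ)).differentiableAt
      |>.differentiableWithinAt,
    (hasFDerivAt_fderiv_legendre hnear (hx₁ ρ₀ hρ₀)).differentiableAt, ?_⟩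
  have hinv := congrArg Matrix.det <| hessian_legendre_mul_hessian hnear (hx₁ ρ₀ hρ₀)
    (((hψ₂ ρ₀ hρ₀).fderiv_right one_add_one_eq_two.le).differentiableAt one_ne_zero)
  rw [Matrix.det_mul, Matrix.det_neg, Matrix.det_one, Fintype.card_fin, neg_one_sq, mul_one]
    at hinv
  have hsymm := hessian_isSymm (hψ₂ ρ₀ hρ₀)
  refine neg_of_mul_pos_left (hinv ▸ one_pos) (hSpd.det_nonpos_of_trace_mul_eq_zero hsymm ?_)
  rw [Matrix.trace_fin_two, Matrix.mul_apply, Matrix.mul_apply, Fin.sum_univ_two,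
    Fin.sum_univ_two]
  linear_combination hEL + S 0 1 * hsymm.apply 0 1 +
    hessian ψ (x ρ₀) 0 1 * (hSpd.isHermitian.apply 0 1 : S 1 0 = S 0 1)

/-- with `ψ` C² on `W`, `x : U → W` C¹, `∇ψ(x(ρ)) = ρ` on `U`, and
`v(ρ) = ψ(x(ρ)) − x(ρ)·ρ`: if at some `ρ₀ ∈ U` there is a symmetric positive definite `S`
with `S₁₁∂²₁₁ψ + 2S₁₂∂²₁₂ψ + S₂₂∂²₂₂ψ = 0` at `x(ρ₀)`, then `v` is twice differentiable at
`ρ₀` and `det D²v(ρ₀) < 0`. -/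
theorem stmt_11 (U W : Set (ℝ × ℝ)) (hU : IsOpen U) (hW : IsOpen W)
    (ψ : ℝ × ℝ → ℝ) (hψ : ContDiffOn ℝ 2 ψ W)
    (x : ℝ × ℝ → ℝ × ℝ) (hxW : Set.MapsTo x U W) (hx : ContDiffOn ℝ 1 x U)
    (hgrad : ∀ ρ ∈ U,
      fderiv ℝ ψ (x ρ) (1, 0) = ρ.1 ∧ fderiv ℝ ψ (x ρ) (0, 1) = ρ.2)
    (ρ₀ : ℝ × ℝ) (hρ₀ : ρ₀ ∈ U)
    (S : Matrix (Fin 2) (Fin 2) ℝ) (hSsymm : S.IsSymm) (hSpd : S.PosDef)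
    (hEL : S 0 0 * hessian ψ (x ρ₀) 0 0 + 2 * S 0 1 * hessian ψ (x ρ₀) 0 1
        + S 1 1 * hessian ψ (x ρ₀) 1 1 = 0) :
    DifferentiableOn ℝ (fun ρ => ψ (x ρ) - ((x ρ).1 * ρ.1 + (x ρ).2 * ρ.2)) U ∧
    DifferentiableAt ℝ
      (fun ρ => fderiv ℝ (fun ρ' => ψ (x ρ') - ((x ρ').1 * ρ'.1 + (x ρ').2 * ρ'.2)) ρ) ρ₀ ∧
    (hessian (fun ρ' => ψ (x ρ') - ((x ρ').1 * ρ'.1 + (x ρ').2 * ρ'.2)) ρ₀).det < 0 :=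
  stmt_11_general U W hU hW ψ hψ x hxW hx hgrad ρ₀ hρ₀ S hSpd hEL
end
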